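/- For every integer n ≥ 1 the central binomial coefficient satisfies C(2n, n) < 4^n / √(π·n). -/

import Mathlib

/-!
Write `n! = sₙ √(2n) (n/e)ⁿ`, where `sₙ = stirlingSeq n`; then `C(2n, n) √n = 4ⁿ s₂ₙ / sₙ²`.
The sequence `sₙ` decreases strictly to `√π` for `n ≥ 1`, so `s₂ₙ ≤ sₙ` and `√π < sₙ`,
whence `s₂ₙ √π < sₙ²` and `C(2n, n) √(πn) < 4ⁿ`.
-/

open Real Nat Stirling

theorem stirlingSeq_succ_lt {n : ℕ} (hn : n ≠ 0) : stirlingSeq (n + 1) < stirlingSeq n := by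
  obtain ⟨m, rfl⟩ := exists_eq_succ_of_ne_zero hn
  have hlog : 0 < log (stirlingSeq (m + 1)) - log (stirlingSeq (m + 2)) :=
    (by positivity : (0 : ℝ) < _).trans_le
      (le_hasSum (log_stirlingSeq_sdiff_hasSum m) 0 fun _ _ ↦ by positivity)
  exact (log_lt_log_iff (stirlingSeq'_pos _) (stirlingSeq'_pos m)).mp (sub_pos.mp hlog)

theorem sqrt_pi_lt_stirlingSeq {n : ℕ} (hn : n ≠ 0) : √π < stirlingSeq n :=
  (sqrt_pi_le_stirlingSeq n.succ_ne_zero).trans_lt (stirlingSeq_succ_lt hn)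

theorem stirlingSeq_two_mul_le {n : ℕ} (hn : n ≠ 0) : stirlingSeq (2 * n) ≤ stirlingSeq n := by
  obtain ⟨m, rfl⟩ := exists_eq_succ_of_ne_zero hn
  exact stirlingSeq'_antitone (show m ≤ 2 * m + 1 by omega)

theorem factorial_eq_stirlingSeq_mul {n : ℕ} (hn : n ≠ 0) :
    (n ! : ℝ) = stirlingSeq n * (√(2 * n) * (n / exp 1) ^ n) := by
  rw [stirlingSeq, div_mul_cancel₀]
  positivity

theorem centralBinom_mul_sqrt_mul_stirlingSeq_sq {n : ℕ} (hn : n ≠ 0) :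
    (centralBinom n : ℝ) * √n * stirlingSeq n ^ 2 = 4 ^ n * stirlingSeq (2 * n) := by
  have hfact : ((2 * n)! : ℝ) = centralBinom n * n ! * n ! := by
    rw [centralBinom_eq_two_mul_choose]
    exact_mod_cast (choose_mul_factorial_mul_factorial (by omega : n ≤ 2 * n)).symm.trans
      (by rw [two_mul, Nat.add_sub_cancel])
  rw [factorial_eq_stirlingSeq_mul hn, factorial_eq_stirlingSeq_mul (by omega)] at hfact
  have hsqrt : √(2 * (2 * n : ℕ) : ℝ) = 2 * √n := by
    rw [show (2 * (2 * n : ℕ) : ℝ) = 2 ^ 2 * n by push_cast; ring, sqrt_mul (by positivity),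
      sqrt_sq zero_le_two]
  have hpow : ((2 * n : ℕ) / exp 1 : ℝ) ^ (2 * n) = 4 ^ n * ((n / exp 1) ^ n) ^ 2 := by
    push_cast
    rw [pow_mul]
    ring
  rw [hsqrt, hpow] at hfact
  refine mul_left_cancel₀ (by positivity : 2 * √n * ((n / exp 1) ^ n) ^ 2 ≠ 0) ?_
  have hsq : √(2 * n : ℝ) ^ 2 = 2 * √n ^ 2 := by
    rw [sq_sqrt (by positivity), sq_sqrt n.cast_nonneg]
  linear_combination
    (-1 : ℝ) * hfact - (centralBinom n * stirlingSeq n ^ 2 * ((n / exp 1) ^ n) ^ 2) * hsq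

theorem stmt19 (n : ℕ) (hn : 1 ≤ n) :
    (Nat.choose (2 * n) n : ℝ) < 4 ^ n / Real.sqrt (Real.pi * n) := by
  have hn0 : n ≠ 0 := by omega
  have hbound : stirlingSeq (2 * n) * √π < stirlingSeq n ^ 2 :=
    calc stirlingSeq (2 * n) * √π ≤ stirlingSeq n * √π := by
          gcongr; exact stirlingSeq_two_mul_le hn0
      _ < stirlingSeq n * stirlingSeq n := by
          have := sqrt_pi_lt_stirlingSeq hn0
          gcongr; exact (sqrt_pos.2 pi_pos).trans this
      _ = stirlingSeq n ^ 2 := (sq _).symm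
  have hn' : (0 : ℝ) < n := by positivity
  rw [← centralBinom_eq_two_mul_choose, lt_div_iff₀ (by positivity), sqrt_mul pi_pos.le]
  refine lt_of_mul_lt_mul_right ?_ (sq_nonneg (stirlingSeq n))
  calc (centralBinom n : ℝ) * (√π * √n) * stirlingSeq n ^ 2
      = 4 ^ n * (stirlingSeq (2 * n) * √π) := by
        linear_combination √π * centralBinom_mul_sqrt_mul_stirlingSeq_sq hn0
    _ < 4 ^ n * stirlingSeq n ^ 2 := by gcongr
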